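/- For all n ≥ 4, A_n is contained in the set P · Σ² · S, where P is the set of prefixes of length f_{n-1} − 1 of elements of A_{n-1}, Σ² is the set of all binary words of length 2, and S is the set of suffixes of length f_{n-2} − 1 of elements of A_{n-2}. -/

import Mathlib

/-- Sets of inflated random Fibonacci words: A₁ = {0}, A₂ = {1},
    Aₙ = Aₙ₋₁Aₙ₋₂ ∪ Aₙ₋₂Aₙ₋₁ for n ≥ 3 (A₀ = ∅). -/
def wordSet : ℕ → Set (List Bool)
  | 0 => ∅
  | 1 => {[false]}
  | 2 => {[true]}
  | (n + 3) => Set.image2 (· ++ ·) (wordSet (n + 2)) (wordSet (n + 1)) ∪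
      Set.image2 (· ++ ·) (wordSet (n + 1)) (wordSet (n + 2))

/-- Concatenation of sets of words: UV = {uv : u ∈ U, v ∈ V}. -/
def cat (U V : Set (List Bool)) : Set (List Bool) := Set.image2 (· ++ ·) U V

/-- W[a,b]: the set of segments wₐ…w_b (1-based indexing) of words in W. -/
def seg (W : Set (List Bool)) (a b : ℕ) : Set (List Bool) :=
  (fun w => (w.drop (a - 1)).take (b - a + 1)) '' W

/-- F(S, m): the set of all contiguous factors of length m of words in S. -/
def factorSet (S : Set (List Bool)) (m : ℕ) : Set (List Bool) :=
  {x | x.length = m ∧ ∃ w ∈ S, x <:+: w}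

/-- Fₙ: the set of factors of length fₙ occurring in any inflated word. -/
def Fn (n : ℕ) : Set (List Bool) := ⋃ m ≥ 1, factorSet (wordSet m) (Nat.fib n)

/-!
Every word of `A (k + 2)` begins with a prefix of a word of `A (k + 1)` of any length below
`f (k + 1)`: for a word `b ++ a` with `b ∈ A k`, `a ∈ A (k + 1)`, the part of the prefix lying in
`a` is shorter than `f (k - 1)`, so two inductive steps move it into a word `c ∈ A (k - 1)`, and
`b ++ c ∈ A (k + 1)`. Each `A n` is closed under reversal, so the same holds for suffixes.
A word of `A n` of length `f n = (f (n - 1) - 1) + 2 + (f (n - 2) - 1)` therefore splits into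
a prefix of a word of `A (n - 1)`, two letters, and a suffix of a word of `A (n - 2)`.
-/

theorem length_of_mem_wordSet : ∀ {n : ℕ} {w : List Bool}, w ∈ wordSet n → w.length = Nat.fib n
  | 1, _, rfl | 2, _, rfl => rfl
  | k + 3, _, .inl ⟨a, ha, b, hb, rfl⟩ => by
    have hfib : Nat.fib (k + 3) = Nat.fib (k + 1) + Nat.fib (k + 2) := Nat.fib_add_two
    rw [List.length_append, length_of_mem_wordSet ha, length_of_mem_wordSet hb, hfib]
    omega
  | k + 3, _, .inr ⟨a, ha, b, hb, rfl⟩ => by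
    have hfib : Nat.fib (k + 3) = Nat.fib (k + 1) + Nat.fib (k + 2) := Nat.fib_add_two
    rw [List.length_append, length_of_mem_wordSet ha, length_of_mem_wordSet hb, hfib]

theorem wordSet_succ_nonempty : ∀ k : ℕ, (wordSet (k + 1)).Nonempty
  | 0 => ⟨[false], rfl⟩
  | 1 => ⟨[true], rfl⟩
  | k + 2 =>
    let ⟨a, ha⟩ := wordSet_succ_nonempty (k + 1)
    let ⟨b, hb⟩ := wordSet_succ_nonempty k
    ⟨a ++ b, .inl ⟨a, ha, b, hb, rfl⟩⟩

theorem reverse_mem_wordSet : ∀ {n : ℕ} {w : List Bool}, w ∈ wordSet n → w.reverse ∈ wordSet n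
  | 1, _, rfl | 2, _, rfl => rfl
  | _ + 3, _, .inl ⟨a, ha, b, hb, rfl⟩ =>
    .inr ⟨b.reverse, reverse_mem_wordSet hb, a.reverse, reverse_mem_wordSet ha,
      List.reverse_append.symm⟩
  | _ + 3, _, .inr ⟨a, ha, b, hb, rfl⟩ =>
    .inl ⟨b.reverse, reverse_mem_wordSet hb, a.reverse, reverse_mem_wordSet ha,
      List.reverse_append.symm⟩

theorem image_take_wordSet_subset :
    ∀ {k m : ℕ}, m < Nat.fib (k + 1) →
      (·.take m) '' wordSet (k + 2) ⊆ (·.take m) '' wordSet (k + 1)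
  | 0, m, hm, _, ⟨_, _, rfl⟩ | 1, m, hm, _, ⟨_, _, rfl⟩ => by
    obtain rfl : m = 0 := by simpa using hm
    obtain ⟨a, ha⟩ := wordSet_succ_nonempty _
    exact ⟨a, ha, rfl⟩
  | k + 2, m, hm, _, ⟨_, .inl ⟨a, ha, b, _, rfl⟩, rfl⟩ => by
    replace hm : m < Nat.fib (k + 3) := hm
    have ha_len : a.length = Nat.fib (k + 3) := length_of_mem_wordSet ha
    exact ⟨a, ha, (List.take_append_of_le_length (by omega)).symm⟩
  | k + 2, m, hm, _, ⟨_, .inr ⟨b, hb, a, ha, rfl⟩, rfl⟩ => by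
    replace hm : m < Nat.fib (k + 3) := hm
    have hb_len : b.length = Nat.fib (k + 2) := length_of_mem_wordSet hb
    have hfib : Nat.fib (k + 3) = Nat.fib (k + 1) + Nat.fib (k + 2) := Nat.fib_add_two
    have hpos : 0 < Nat.fib (k + 1) := Nat.fib_pos.mpr (by omega)
    have hmono : Nat.fib (k + 1) ≤ Nat.fib (k + 2) := Nat.fib_mono (by omega)
    have hm' : m - b.length < Nat.fib (k + 1) := by omega
    obtain ⟨a', ha', ha'_take⟩ :=
      image_take_wordSet_subset (k := k + 1) (hm'.trans_le hmono) ⟨a, ha, rfl⟩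
    obtain ⟨c, hc, hc_take⟩ := image_take_wordSet_subset hm' ⟨a', ha', rfl⟩
    refine ⟨b ++ c, .inl ⟨b, hb, c, hc, rfl⟩, ?_⟩
    simp only [List.take_append, hc_take, ha'_take]

theorem image_rtake_wordSet_subset {k m : ℕ} (hm : m < Nat.fib (k + 1)) :
    (·.rtake m) '' wordSet (k + 2) ⊆ (·.rtake m) '' wordSet (k + 1) := by
  rintro _ ⟨v, hv, rfl⟩
  obtain ⟨a, ha, h⟩ := image_take_wordSet_subset hm ⟨v.reverse, reverse_mem_wordSet hv, rfl⟩
  exact ⟨a.reverse, reverse_mem_wordSet ha,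
    by simp only [List.rtake_eq_reverse_take_reverse, List.reverse_reverse, h]⟩

theorem mem_cat_cat_of_length_eq {P S : Set (List Bool)} {w : List Bool} {p q : ℕ}
    (hw : w.length = p + 2 + q) (hP : w.take p ∈ P) (hS : w.rtake q ∈ S) :
    w ∈ cat (cat P {l | l.length = 2}) S := by
  refine ⟨_, ⟨_, hP, (w.drop p).take 2, by simp; omega, rfl⟩, _, hS, ?_⟩
  show w.take p ++ (w.drop p).take 2 ++ w.drop (w.length - q) = w
  rw [show w.length - q = p + 2 by omega, ← List.drop_drop, List.append_assoc,
    List.take_append_drop, List.take_append_drop]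

theorem stmt10 (n : ℕ) (hn : 4 ≤ n) :
    wordSet n ⊆
      cat (cat ((fun w : List Bool => w.take (Nat.fib (n - 1) - 1)) '' wordSet (n - 1))
          {l : List Bool | l.length = 2})
        ((fun w : List Bool => w.drop (w.length - (Nat.fib (n - 2) - 1))) '' wordSet (n - 2)) := by
  obtain ⟨k, rfl⟩ : ∃ k, n = k + 3 := ⟨n - 3, by omega⟩
  rw [show k + 3 - 1 = k + 2 by omega, show k + 3 - 2 = k + 1 by omega]
  intro w hw
  have hfib : Nat.fib (k + 3) = Nat.fib (k + 1) + Nat.fib (k + 2) := Nat.fib_add_two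
  have hpos : 0 < Nat.fib (k + 1) := Nat.fib_pos.mpr (by omega)
  have hmono : Nat.fib (k + 1) ≤ Nat.fib (k + 2) := Nat.fib_mono (by omega)
  have hp : Nat.fib (k + 2) - 1 < Nat.fib (k + 2) := by omega
  have hq : Nat.fib (k + 1) - 1 < Nat.fib (k + 1) := by omega
  apply mem_cat_cat_of_length_eq (p := Nat.fib (k + 2) - 1) (q := Nat.fib (k + 1) - 1)
  · rw [length_of_mem_wordSet hw]
    omega
  · exact image_take_wordSet_subset hp ⟨w, hw, rfl⟩
  · exact image_rtake_wordSet_subset hq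
      (image_rtake_wordSet_subset (hq.trans_le hmono) ⟨w, hw, rfl⟩)
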